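/- If n is a positive integer and w_1, …, w_n are pairwise coprime positive integers, then there are no w-bubbles. -/

import Mathlib

/-- The weighted dot product `w · u = ∑ i, w i * u i`. -/
def dotW {n : ℕ} (w u : Fin n → ℕ) : ℕ := ∑ i, w i * u i

/-- `d_w`, the least common multiple of the weights. -/
def lcmW {n : ℕ} (w : Fin n → ℕ) : ℕ := Finset.univ.lcm w

/-- `u` is a `w`-bubble: `w · u ≥ 2 d_w` and there is no `v ⪯ u` with `w · v = d_w`. -/
def IsBubble {n : ℕ} (w u : Fin n → ℕ) : Prop :=
  2 * lcmW w ≤ dotW w u ∧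
    ¬ ∃ v : Fin n → ℕ, (∀ i, v i ≤ u i) ∧ dotW w v = lcmW w

/-!
Read `u` as a purse holding `u k` coins of value `w k`, from which `d = lcmW w` must be paid
exactly. Paying greedily with coins worth at most `M` stops less than `M` short of the target, so
it suffices to set aside some stacks that can pay any of `M` consecutive amounts, where no other
coin is worth more than `M`. Let `i` be the most valuable stack among the coins of value `≠ 1`.
If stack `i` alone is worth `d`, pay with it. If there are at least `w i` coins of value `1`,
they and stack `i` together pay every amount up to their total. Otherwise the other stacks of
value `≠ 1` are worth more than `d`; since the weights are pairwise coprime their product divides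
`d`, which forces the best of them, `g`, to be worth more than `w i * w g`, and then the coprime
stacks `i` and `g` pay every amount in `[w i * w g, c i + c g - w i * w g]`, where
`c k = w k * u k`.
-/

open Finset

section Arithmetic

theorem exists_mul_add_eq_of_le_mul_add {a m α T : ℕ} (ha : a ≤ m + 1) (hT : T ≤ a * α + m) :
    ∃ x ≤ α, ∃ t ≤ m, a * x + t = T := by
  rcases le_or_gt (T / a) α with h | h
  · refine ⟨T / a, h, T % a, ?_, Nat.div_add_mod T a⟩
    rcases a.eq_zero_or_pos with rfl | ha₀
    · simpa using hT
    · have := Nat.mod_lt T ha₀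
      omega
  · have : a * α ≤ T := (Nat.mul_le_mul_left a h.le).trans (Nat.mul_div_le T a)
    exact ⟨α, le_rfl, T - a * α, by omega, by omega⟩

theorem exists_mul_add_mul_eq {a b α β T : ℕ} (hab : a.Coprime b) (ha : 0 < a) (hb : 0 < b)
    (hα : b ≤ α) (hβ : a ≤ β) (hT : a * b ≤ T) (hTα : T + a * b ≤ a * α + b * β) :
    ∃ x ≤ α, ∃ y ≤ β, a * x + b * y = T := by
  -- `k < ab` with `k ≡ 0 [MOD a]` and `k ≡ T [MOD b]` is `a * x₀` with `x₀ < b ≤ α`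
  let k := Nat.chineseRemainder hab 0 T
  have hk : (k : ℕ) < a * b := Nat.chineseRemainder_lt_mul hab 0 T ha.ne' hb.ne'
  obtain ⟨x₀, hx₀⟩ := Nat.modEq_zero_iff_dvd.mp k.2.1
  obtain ⟨y₀, hy₀⟩ := (Nat.modEq_iff_dvd' (by omega)).mp k.2.2
  have hex : ∃ y, ∃ x ≤ α, a * x + b * y = T := by
    refine ⟨y₀, x₀, ?_, by omega⟩
    have : a * x₀ < a * b := by omega
    exact (Nat.lt_of_mul_lt_mul_left this).le.trans hα
  classical
  obtain ⟨x, hxα, hxy⟩ := Nat.find_spec hex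
  set y := Nat.find hex
  refine ⟨x, hxα, y, ?_, hxy⟩
  by_contra! hy
  -- the solution with least `y` cannot be shifted to `(x + b, y - a)`
  have hxb : α < x + b := by
    by_contra! h
    refine Nat.find_min hex (show y - a < y by omega) ⟨x + b, h, ?_⟩
    have h₁ : b * (y - a) = b * y - a * b := by rw [Nat.mul_sub, mul_comm b a]
    have h₂ : a * b ≤ b * y := by rw [mul_comm]; exact Nat.mul_le_mul_left b (by omega)
    rw [mul_add, h₁]
    omega
  have : b * β < b * y := Nat.mul_lt_mul_of_pos_left hy hb
  have : a * α < a * (x + b) := Nat.mul_lt_mul_of_pos_left hxb ha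
  rw [mul_add] at this
  omega

end Arithmetic

namespace Finset

variable {ι : Type*} {s : Finset ι} {f c : ι → ℕ} {g : ι} {a d : ℕ}

theorem card_lt_prod_of_two_le (hf : ∀ i ∈ s, 2 ≤ f i) : #s < ∏ i ∈ s, f i :=
  Nat.lt_two_pow_self.trans_le (pow_card_le_prod s f 2 hf)

variable [DecidableEq ι]

theorem card_add_one_mul_le_two_mul_prod (hf : ∀ i ∈ s, 2 ≤ f i) {k : ι} (hk : k ∈ s) :
    (#s + 1) * f k ≤ 2 * ∏ i ∈ s, f i := by
  have hcard := card_erase_add_one hk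
  have hlt : #(s.erase k) < ∏ i ∈ s.erase k, f i :=
    card_lt_prod_of_two_le fun i hi => hf i (mem_of_mem_erase hi)
  rw [← mul_prod_erase s f hk]
  calc (#s + 1) * f k ≤ (2 * ∏ i ∈ s.erase k, f i) * f k := Nat.mul_le_mul_right _ (by omega)
    _ = 2 * (f k * ∏ i ∈ s.erase k, f i) := by ring

theorem card_mul_le_of_mul_prod_le (hg : g ∈ s) (hf : ∀ i ∈ s.erase g, 2 ≤ f i)
    (hprod : a * ∏ i ∈ s, f i ≤ d) : #s * (a * f g) ≤ d := by
  have hcard : #s ≤ ∏ i ∈ s.erase g, f i := by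
    have := card_lt_prod_of_two_le hf
    rw [card_erase_of_mem hg] at this
    have := card_pos.mpr ⟨g, hg⟩
    omega
  calc #s * (a * f g) ≤ (∏ i ∈ s.erase g, f i) * (a * f g) := Nat.mul_le_mul_right _ hcard
    _ = a * ∏ i ∈ s, f i := by rw [← mul_prod_erase s f hg]; ring
    _ ≤ d := hprod

theorem mul_lt_of_mul_prod_le_of_lt_sum (hg : g ∈ s) (hf : ∀ i ∈ s.erase g, 2 ≤ f i)
    (hmax : ∀ k ∈ s, c k ≤ c g) (hprod : a * ∏ i ∈ s, f i ≤ d) (hsum : d < ∑ i ∈ s, c i) :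
    a * f g < c g := by
  have := card_mul_le_of_mul_prod_le hg hf hprod
  have : ∑ i ∈ s, c i ≤ #s * c g := by simpa using sum_le_card_nsmul s c (c g) hmax
  exact Nat.lt_of_mul_lt_mul_left (a := #s) (by omega)

theorem two_mul_mul_add_le_of_mul_prod_le_of_lt_sum (hg : g ∈ s) (hf : ∀ i ∈ s.erase g, 2 ≤ f i)
    (hmax : ∀ k ∈ s, c k ≤ c g) (hprod : a * ∏ i ∈ s, f i ≤ d) (hsum : d < ∑ i ∈ s, c i)
    (ha : 0 < a) (hfg : 2 ≤ f g) {k : ι} (hk : k ∈ s.erase g) :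
    2 * (a * f g) + f k ≤ 2 * c g := by
  have hlt := mul_lt_of_mul_prod_le_of_lt_sum hg hf hmax hprod hsum
  rcases le_or_gt (f k) 2 with hk2 | hk3
  · omega
  set B := a * f g
  set P := ∏ i ∈ s.erase g, f i
  have hB : 2 ≤ B := le_mul_of_one_le_of_le ha hfg
  have hsP : #s * f k ≤ 2 * P := by
    simpa [card_erase_add_one hg] using card_add_one_mul_le_two_mul_prod hf hk
  have hBP : B * P ≤ d := calc
    B * P = a * ∏ i ∈ s, f i := by rw [← mul_prod_erase s f hg]; ring
    _ ≤ d := hprod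
  have hlin : 2 * B + f k ≤ B * f k + 1 := by nlinarith
  have : ∑ i ∈ s, c i ≤ #s * c g := by simpa using sum_le_card_nsmul s c (c g) hmax
  suffices 2 * B + f k - 1 < 2 * c g by omega
  refine Nat.lt_of_mul_lt_mul_left (a := #s * f k) ?_
  calc #s * f k * (2 * B + f k - 1) ≤ 2 * P * (B * f k) := Nat.mul_le_mul hsP (by omega)
    _ = 2 * f k * (B * P) := by ring
    _ ≤ 2 * f k * d := Nat.mul_le_mul_left _ hBP
    _ < #s * f k * (2 * c g) := by nlinarith

end Finset

theorem Pi.single_apply_add_le {ι : Type*} [DecidableEq ι] {u v : ι → ℕ} {i : ι} (hv : v ≤ u)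
    (hvi : v i = 0) : Pi.single i (u i) + v ≤ u := by
  intro k
  rcases eq_or_ne k i with rfl | hk
  · simp [hvi]
  · simpa [hk] using hv k

section Reachable

variable {n : ℕ} (w : Fin n → ℕ) {u v : Fin n → ℕ}

theorem dotW_add (u v : Fin n → ℕ) : dotW w (u + v) = dotW w u + dotW w v := by
  simp [dotW, mul_add, sum_add_distrib]

theorem dotW_single (i : Fin n) (x : ℕ) : dotW w (Pi.single i x) = w i * x := by
  simp [dotW, Pi.single_apply]

theorem dotW_eq_dotW_indicator_add_sum (u : Fin n → ℕ) :
    dotW w u = dotW w ({k | w k = 1}.indicator u) + ∑ k ∈ univ.filter (w · ≠ 1), w k * u k := by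
  rw [dotW, dotW, ← sum_filter_add_sum_filter_not univ (w · = 1)]
  congr 1
  simp [Set.indicator_apply, mul_ite, sum_ite]

def Reachable (w u : Fin n → ℕ) (T : ℕ) : Prop := ∃ v ≤ u, dotW w v = T

variable {w}

theorem Reachable.add {T₁ T₂ : ℕ} (h₁ : Reachable w u T₁) (h₂ : Reachable w v T₂) :
    Reachable w (u + v) (T₁ + T₂) := by
  obtain ⟨v₁, hv₁, rfl⟩ := h₁
  obtain ⟨v₂, hv₂, rfl⟩ := h₂
  exact ⟨v₁ + v₂, add_le_add hv₁ hv₂, dotW_add w v₁ v₂⟩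

theorem reachable_zero : Reachable w u 0 := ⟨0, fun _ => Nat.zero_le _, by simp [dotW]⟩

theorem reachable_single {i : Fin n} {x : ℕ} (hx : x ≤ u i) : Reachable w u (w i * x) := by
  refine ⟨Pi.single i x, fun k => ?_, dotW_single w i x⟩
  rcases eq_or_ne k i with rfl | hk
  · simpa using hx
  · simp [hk]

theorem reachable_of_dvd_of_le {i : Fin n} {D : ℕ} (hD : w i ∣ D) (hDu : D ≤ w i * u i) :
    Reachable w u D := by
  obtain ⟨q, rfl⟩ := hD
  rcases (w i).eq_zero_or_pos with hw | hw
  · simpa [hw] using reachable_zero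
  · exact reachable_single (Nat.le_of_mul_le_mul_left hDu hw)

theorem exists_reachable_le_lt_add {M X : ℕ} (hM : ∀ k, u k ≠ 0 → w k ≤ M)
    (hX : X < dotW w u + M) : ∃ s, Reachable w u s ∧ s ≤ X ∧ X < s + M := by
  classical
  -- take `v ⪯ u` of weight at most `X` with as many coins as possible
  obtain ⟨v, hv, hvmax⟩ := ((Iic u).filter (dotW w · ≤ X)).exists_max_image (∑ k, · k)
    ⟨0, mem_filter.2 ⟨mem_Iic.2 fun _ => Nat.zero_le _, by simp [dotW]⟩⟩
  rw [mem_filter, mem_Iic] at hv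
  refine ⟨dotW w v, ⟨v, hv.1, rfl⟩, hv.2, ?_⟩
  by_contra! hvX
  obtain ⟨k, hk⟩ : ∃ k, v k < u k := by
    by_contra! h
    rw [le_antisymm hv.1 h] at hvX
    omega
  have hnext := hvmax (v + Pi.single k 1) <| by
    rw [mem_filter, mem_Iic, dotW_add, dotW_single]
    refine ⟨fun j => ?_, by have := hM k (by omega); omega⟩
    rcases eq_or_ne j k with rfl | hj
    · simpa using hk
    · simpa [hj] using hv.1 j
  simp [sum_add_distrib] at hnext

theorem reachable_of_le_of_weight_le_one {T : ℕ} (hw : ∀ k, u k ≠ 0 → w k ≤ 1)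
    (hT : T ≤ dotW w u) : Reachable w u T := by
  obtain ⟨s, hs, hsT, hTs⟩ := exists_reachable_le_lt_add (X := T) hw (by omega)
  rwa [show T = s by omega]

theorem reachable_of_forall_reachable_Ico {u₁ : Fin n → ℕ} {L M D : ℕ} (hu₁ : u₁ ≤ u)
    (h₁ : ∀ T, L ≤ T → T < L + M → Reachable w u₁ T) (hM : ∀ k, u₁ k < u k → w k ≤ M)
    (hLD : L ≤ D) (hD : D + dotW w u₁ < dotW w u + L + M) : Reachable w u D := by
  have hu : u₁ + (u - u₁) = u := add_tsub_cancel_of_le hu₁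
  have hdot := dotW_add w u₁ (u - u₁)
  rw [hu] at hdot
  obtain ⟨s, hs, hsD, hDs⟩ := exists_reachable_le_lt_add (u := u - u₁) (X := D - L)
    (fun k hk => hM k (by simp at hk; omega)) (by omega)
  rw [← hu, show D = (D - s) + s by omega]
  exact (h₁ _ (by omega) (by omega)).add hs

end Reachable

section PairwiseCoprime

variable {n : ℕ} {w u : Fin n → ℕ} {i : Fin n}

theorem prod_dvd_lcmW (hcop : ∀ i j, i ≠ j → (w i).Coprime (w j)) (t : Finset (Fin n)) :
    ∏ k ∈ t, w k ∣ lcmW w :=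
  t.prod_dvd_of_isRelPrime (fun i _ j _ hij => Nat.coprime_iff_isRelPrime.mp (hcop i j hij))
    fun k _ => dvd_lcm (mem_univ k)

theorem reachable_of_weight_le_ones {D : ℕ} (hi : w i ≠ 1)
    (hmax : ∀ k, w k ≠ 1 → w k * u k ≤ w i * u i)
    (hwi : w i ≤ dotW w ({k | w k = 1}.indicator u) + 1) (hD : D ≤ dotW w u) :
    Reachable w u D := by
  set o := {k | w k = 1}.indicator u with ho_def
  have hoi : o i = 0 := Set.indicator_of_notMem (s := {k | w k = 1}) hi u
  have hdot : dotW w (Pi.single i (u i) + o) = w i * u i + dotW w o := by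
    rw [dotW_add, dotW_single]
  refine reachable_of_forall_reachable_Ico (u₁ := Pi.single i (u i) + o)
    (Pi.single_apply_add_le (Set.indicator_le_self _ _) hoi) (L := 0)
    (M := w i * u i + dotW w o + 1) (fun T _ hT => ?_) (fun k hk => ?_) (Nat.zero_le D) (by omega)
  · obtain ⟨x, hx, t, ht, rfl⟩ := exists_mul_add_eq_of_le_mul_add hwi (α := u i) (by omega : T ≤ _)
    exact (reachable_single (by simpa using hx)).add <| reachable_of_le_of_weight_le_one
      (fun k hk => (Set.mem_of_indicator_ne_zero hk).le) ht
  · have hki : k ≠ i := by rintro rfl; simp [hoi] at hk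
    have hk1 : w k ≠ 1 := fun h => by
      simp [hki, ho_def, Set.indicator_of_mem (show k ∈ {k | w k = 1} from h)] at hk
    have := hmax k hk1
    have : w k ≤ w k * u k := Nat.le_mul_of_pos_right _ (by omega)
    omega

theorem lcmW_lt_sum_erase (hi : w i ≠ 1) (hci : w i * u i < lcmW w)
    (hones : dotW w ({k | w k = 1}.indicator u) < w i) (hu : 2 * lcmW w ≤ dotW w u) :
    lcmW w < ∑ k ∈ (univ.filter (w · ≠ 1)).erase i, w k * u k := by
  have hsplit := dotW_eq_dotW_indicator_add_sum w u
  rw [← add_sum_erase _ _ (by simpa using hi : i ∈ univ.filter (w · ≠ 1))] at hsplit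
  obtain ⟨q, hq⟩ : w i ∣ lcmW w := dvd_lcm (mem_univ i)
  have : w i * (u i + 1) ≤ w i * q :=
    Nat.mul_le_mul_left _ (Nat.lt_of_mul_lt_mul_left (hq ▸ hci))
  rw [mul_add, ← hq] at this
  omega

theorem reachable_lcmW_of_ones_lt (hw : ∀ i, 0 < w i)
    (hcop : ∀ i j, i ≠ j → (w i).Coprime (w j)) (hi : w i ≠ 1)
    (hmax : ∀ k, w k ≠ 1 → w k * u k ≤ w i * u i) (hci : w i * u i < lcmW w)
    (hones : dotW w ({k | w k = 1}.indicator u) < w i) (hu : 2 * lcmW w ≤ dotW w u) :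
    Reachable w u (lcmW w) := by
  set d := lcmW w
  set N := univ.filter (w · ≠ 1)
  have hiN : i ∈ N := by simpa [N] using hi
  have htwo : ∀ k ∈ N, 2 ≤ w k := fun k hk => by
    have := hw k; have : w k ≠ 1 := by simpa [N] using hk
    omega
  set s := N.erase i
  have hprod : w i * ∏ k ∈ s, w k ≤ d := by
    rw [mul_prod_erase N w hiN]
    exact Nat.le_of_dvd (by omega) (prod_dvd_lcmW hcop N)
  have hsum : d < ∑ k ∈ s, w k * u k := lcmW_lt_sum_erase hi hci hones hu
  obtain ⟨g, hg, hgmax⟩ := s.exists_max_image (fun k => w k * u k)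
    (nonempty_of_ne_empty fun h => by simp [h] at hsum)
  have hgi : g ≠ i := ne_of_mem_erase hg
  have hf : ∀ k ∈ s.erase g, 2 ≤ w k := fun k hk => htwo k (mem_of_mem_erase (mem_of_mem_erase hk))
  have hab := mul_lt_of_mul_prod_le_of_lt_sum hg hf hgmax hprod hsum
  have hcg := hmax g (by have := htwo g (mem_of_mem_erase hg); omega)
  have hα : w g ≤ u i := (Nat.lt_of_mul_lt_mul_left (a := w i) (by omega)).le
  have hβ : w i ≤ u g := (Nat.lt_of_mul_lt_mul_left (a := w g) (by rw [mul_comm]; omega)).le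
  have hdot : dotW w (Pi.single i (u i) + Pi.single g (u g)) = w i * u i + w g * u g := by
    rw [dotW_add, dotW_single, dotW_single]
  have hgu : Pi.single g (u g) ≤ u := fun k => by
    rcases eq_or_ne k g with rfl | hk <;> simp [*]
  refine reachable_of_forall_reachable_Ico
    (Pi.single_apply_add_le (i := i) hgu (by simp [hgi.symm]))
    (L := w i * w g) (M := w i * u i + w g * u g + 1 - 2 * (w i * w g))
    (fun T hT₁ hT₂ => ?_) (fun k hk => ?_) (by omega) (by omega)
  · obtain ⟨x, hx, y, hy, rfl⟩ :=
      exists_mul_add_mul_eq (hcop i g hgi.symm) (hw i) (hw g) hα hβ hT₁ (by omega)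
    exact (reachable_single (by simpa using hx)).add (reachable_single (by simpa [hgi] using hy))
  · have hki : k ≠ i := by rintro rfl; simp [hgi.symm] at hk
    have hkg : k ≠ g := by rintro rfl; simp at hk
    by_cases hk1 : w k = 1
    · omega
    · have := two_mul_mul_add_le_of_mul_prod_le_of_lt_sum hg hf hgmax hprod hsum (hw i)
        (htwo g (mem_of_mem_erase hg)) (k := k) (by simp [s, N, hk1, hki, hkg])
      omega

end PairwiseCoprime

theorem no_bubble_of_pairwise_coprime_general {n : ℕ} (w : Fin n → ℕ)
    (hw : ∀ i, 0 < w i) (hcop : ∀ i j : Fin n, i ≠ j → Nat.Coprime (w i) (w j)) :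
    ¬ ∃ u : Fin n → ℕ, IsBubble w u := by
  rintro ⟨u, hu, hno⟩
  refine hno (?_ : Reachable w u (lcmW w))
  by_cases hN : ∀ k, w k = 1
  · exact reachable_of_le_of_weight_le_one (fun k _ => (hN k).le) (by omega)
  obtain ⟨k, hk⟩ := not_forall.mp hN
  obtain ⟨i, hi, hmax⟩ := (univ.filter (w · ≠ 1)).exists_max_image (fun k => w k * u k)
    ⟨k, by simpa using hk⟩
  replace hi : w i ≠ 1 := by simpa using hi
  replace hmax : ∀ k, w k ≠ 1 → w k * u k ≤ w i * u i := fun k hk => hmax k (by simpa using hk)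
  by_cases hci : lcmW w ≤ w i * u i
  · exact reachable_of_dvd_of_le (dvd_lcm (mem_univ i)) hci
  rcases le_or_gt (w i) (dotW w ({k | w k = 1}.indicator u)) with hC | hD
  · exact reachable_of_weight_le_ones hi hmax (by omega) (by omega)
  · exact reachable_lcmW_of_ones_lt hw hcop hi hmax (by omega) hD hu

theorem no_bubble_of_pairwise_coprime {n : ℕ} (hn : 0 < n) (w : Fin n → ℕ)
    (hw : ∀ i, 0 < w i) (hcop : ∀ i j : Fin n, i ≠ j → Nat.Coprime (w i) (w j)) :
    ¬ ∃ u : Fin n → ℕ, IsBubble w u :=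
  no_bubble_of_pairwise_coprime_general w hw hcop
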